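/- arXiv:1206.5221 — 7 statements merged into one kernel-verified Lean document; each statement's English description precedes it below -/
import Mathlib

section
/- Let Q be a digraph and a a source vertex of Q (every connection touching a is an outgoing arrow). Then in the Hecke–Kiselman monoid H_Q, for every element x one has a·x·a = a·x. -/
open FreeMonoid

structure HKGraph (V : Type) where
  edge : V → V → Prop
  arrow : V → V → Prop
  edge_symm : ∀ i j, edge i j → edge j i
  edge_irrefl : ∀ i, ¬ edge i i
  arrow_irrefl : ∀ i, ¬ arrow i i
  edge_not_arrow : ∀ i j, edge i j → ¬ arrow i j
  arrow_asymm : ∀ i j, arrow i j → ¬ arrow j i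

namespace HKGraph
variable {V : Type}

/-- The defining relations of the Hecke–Kiselman monoid of a digraph. -/
inductive Rel (Q : HKGraph V) : FreeMonoid V → FreeMonoid V → Prop
  | idem (i : V) : Rel Q (of i * of i) (of i)
  | comm (i j : V) : i ≠ j → ¬ Q.edge i j → ¬ Q.arrow i j → ¬ Q.arrow j i →
      Rel Q (of i * of j) (of j * of i)
  | braid (i j : V) : Q.edge i j → Rel Q (of i * of j * of i) (of j * of i * of j)
  | arrow_left (i j : V) : Q.arrow i j → Rel Q (of i * of j) (of i * of j * of i)
  | arrow_right (i j : V) : Q.arrow i j → Rel Q (of i * of j) (of j * of i * of j)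

/-- The Hecke–Kiselman monoid of a digraph. -/
abbrev HK (Q : HKGraph V) : Type := (conGen Q.Rel).Quotient

/-- The idempotent generator of `HK Q` attached to a vertex. -/
def gen (Q : HKGraph V) (i : V) : HK Q := Con.mk' _ (of i)

end HKGraph

/-! Since `a` is idempotent, the elements `x` with `a x a = a x` form a submonoid
(`a x y a = (a x a) y a = a x (a y a) = a x a y = a x y`). Each generator lies in it:
`a` by idempotence, a target `j` of an arrow `a → j` by the relation `a j = a j a`, and
every other vertex `j` because, `a` being a source, `a` and `j` commute. -/

theorem IsIdempotentElem.mul_mul_eq_of_mem_closure {M : Type*} [Monoid M] {e : M}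
    (he : IsIdempotentElem e) {s : Set M} (hs : ∀ g ∈ s, e * g * e = e * g)
    {x : M} (hx : x ∈ Submonoid.closure s) : e * x * e = e * x := by
  induction hx using Submonoid.closure_induction with
  | mem g hg => exact hs g hg
  | one => simpa using he.eq
  | mul x y _ _ hx hy =>
    calc e * (x * y) * e = e * x * e * (y * e) := by rw [hx]; simp only [mul_assoc]
      _ = e * x * (e * y * e) := by simp only [mul_assoc]
      _ = e * x * e * y := by rw [hy]; simp only [mul_assoc]
      _ = e * (x * y) := by rw [hx, mul_assoc]

namespace HKGraph

variable {V : Type} (Q : HKGraph V)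

theorem closure_range_gen : Submonoid.closure (Set.range Q.gen) = ⊤ := by
  rw [show Q.gen = Con.mk' _ ∘ of from rfl, Set.range_comp, ← MonoidHom.map_mclosure,
    FreeMonoid.closure_range_of, ← MonoidHom.mrange_eq_map, MonoidHom.mrange_eq_top]
  exact Con.mk'_surjective

theorem mk'_eq_of_rel {u v : FreeMonoid V} (h : Q.Rel u v) :
    Con.mk' (conGen Q.Rel) u = Con.mk' (conGen Q.Rel) v :=
  (conGen Q.Rel).eq.mpr (ConGen.Rel.of u v h)

theorem isIdempotentElem_gen (i : V) : IsIdempotentElem (Q.gen i) := by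
  rw [IsIdempotentElem]
  simpa only [gen, ← map_mul] using Q.mk'_eq_of_rel (Rel.idem i)

theorem gen_mul_gen_comm {i j : V} (hij : i ≠ j) (hedge : ¬ Q.edge i j)
    (harr : ¬ Q.arrow i j) (harr' : ¬ Q.arrow j i) :
    Q.gen i * Q.gen j = Q.gen j * Q.gen i := by
  simpa only [gen, ← map_mul] using Q.mk'_eq_of_rel (Rel.comm i j hij hedge harr harr')

theorem gen_mul_gen_of_arrow {i j : V} (h : Q.arrow i j) :
    Q.gen i * Q.gen j = Q.gen i * Q.gen j * Q.gen i := by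
  simpa only [gen, ← map_mul] using Q.mk'_eq_of_rel (Rel.arrow_left i j h)

theorem gen_mul_gen_mul_gen_of_source {a : V} (hedge : ∀ j, ¬ Q.edge a j)
    (harr : ∀ j, ¬ Q.arrow j a) (j : V) :
    Q.gen a * Q.gen j * Q.gen a = Q.gen a * Q.gen j := by
  by_cases hja : j = a
  · rw [hja, (Q.isIdempotentElem_gen a).eq, (Q.isIdempotentElem_gen a).eq]
  by_cases haj : Q.arrow a j
  · exact (Q.gen_mul_gen_of_arrow haj).symm
  · rw [Q.gen_mul_gen_comm (Ne.symm hja) (hedge j) haj (harr j), mul_assoc,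
      (Q.isIdempotentElem_gen a).eq]

end HKGraph

/-- If `a` is a source vertex (every connection touching `a` is an outgoing arrow),
then `a·x·a = a·x` for every `x` in the Hecke–Kiselman monoid. -/
theorem source_absorb {V : Type} (Q : HKGraph V) (a : V)
    (hsource : (∀ j, ¬ Q.edge a j) ∧ (∀ j, ¬ Q.arrow j a)) :
    ∀ x : Q.HK, Q.gen a * x * Q.gen a = Q.gen a * x := by
  intro x
  refine (Q.isIdempotentElem_gen a).mul_mul_eq_of_mem_closure ?_
    (Q.closure_range_gen ▸ Submonoid.mem_top x)
  rintro _ ⟨j, rfl⟩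
  exact Q.gen_mul_gen_mul_gen_of_source hsource.1 hsource.2 j
end

section
/- For n ≥ 3, define maps u_1, …, u_n : ℤ^n → ℤ^n by u_i(m_1,…,m_n) = (m_1,…,m_{i-1}, m_{i+1}, m_{i+1}, m_{i+2},…,m_n) for 1 ≤ i ≤ n−1 (i.e. the i-th coordinate is replaced by m_{i+1}), and u_n(m_1,…,m_n) = (m_1,…,m_{n-1}, m_1 + 1). Then each u_i is idempotent, u_i ∘ u_j = u_j ∘ u_i whenever i and j are not cyclically adjacent (i.e. j ≢ i ± 1 mod n), and for each i (indices mod n) one has u_i ∘ u_{i+1} = u_i ∘ u_{i+1} ∘ u_i = u_{i+1} ∘ u_i ∘ u_{i+1}. -/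
/-!
Each `u_i` has the shape `m ↦ update m i (g (m (i + 1)))` with `g` a translation: it
overwrites one coordinate by a function of another. For such maps all the relations are
bookkeeping about which coordinates are read and written, and they only need the indices `i`,
`i + 1`, `i + 2` to be pairwise distinct, which is where `3 ≤ n` enters.
-/

/-- The map `u_i : ℤ^n → ℤ^n` (indices `0,…,n-1` for `1,…,n`): for `i < n-1`, it replaces
the `i`-th coordinate by the `(i+1)`-st one, and for `i = n-1` it replaces the last
coordinate by `m_0 + 1`. -/
def cycleMap (n : ℕ) [NeZero n] (i : Fin n) (m : Fin n → ℤ) : Fin n → ℤ :=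
  Function.update m i (if (i : ℕ) = n - 1 then m 0 + 1 else m (i + 1))

section UpdateFrom

open Function

variable {ι α : Type*} [DecidableEq ι]

def updateFrom (i j : ι) (g : α → α) (m : ι → α) : ι → α :=
  update m i (g (m j))

theorem updateFrom_idem {i j : ι} (hji : j ≠ i) (g : α → α) :
    updateFrom i j g ∘ updateFrom i j g = updateFrom i j g := by
  funext m
  simp only [comp_apply, updateFrom, update_of_ne hji, update_idem]

theorem updateFrom_comm {i j i' j' : ι} (hii' : i ≠ i') (hji' : j ≠ i') (hj'i : j' ≠ i)
    (g g' : α → α) :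
    updateFrom i j g ∘ updateFrom i' j' g' = updateFrom i' j' g' ∘ updateFrom i j g := by
  funext m
  simp only [comp_apply, updateFrom, update_of_ne hji', update_of_ne hj'i, update_comm hii']

theorem updateFrom_comp_updateFrom_comp_self {i j k : ι} (hji : j ≠ i) (hki : k ≠ i)
    (g g' : α → α) :
    updateFrom i j g ∘ updateFrom j k g' ∘ updateFrom i j g =
      updateFrom i j g ∘ updateFrom j k g' := by
  funext m
  simp only [comp_apply, updateFrom, update_of_ne hki, update_self, update_comm hji, update_idem]

theorem updateFrom_comp_updateFrom_comp_updateFrom {i j k : ι} (hji : j ≠ i) (hki : k ≠ i)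
    (hkj : k ≠ j) (g g' : α → α) :
    updateFrom j k g' ∘ updateFrom i j g ∘ updateFrom j k g' =
      updateFrom i j g ∘ updateFrom j k g' := by
  funext m
  simp only [comp_apply, updateFrom, update_of_ne hki, update_of_ne hkj, update_self,
    update_comm hji, update_idem]

end UpdateFrom

section FinNatCast

open Fin.NatCast

theorem Fin.add_natCast_ne_self {n : ℕ} [NeZero n] (i : Fin n) {k : ℕ} (hk : 0 < k)
    (hkn : k < n) : i + (k : Fin n) ≠ i := by
  intro h
  have hk0 : (k : Fin n) = 0 := by simpa using h
  exact absurd (Nat.le_of_dvd hk (Fin.natCast_eq_zero.mp hk0)) (by omega)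

theorem Fin.add_one_ne_self {n : ℕ} [NeZero n] (hn : 2 ≤ n) (i : Fin n) : i + 1 ≠ i := by
  simpa using i.add_natCast_ne_self (k := 1) Nat.one_pos (by omega)

theorem Fin.add_one_add_one_ne_self {n : ℕ} [NeZero n] (hn : 3 ≤ n) (i : Fin n) :
    i + 1 + 1 ≠ i := by
  rw [add_assoc, one_add_one_eq_two]
  simpa using i.add_natCast_ne_self (k := 2) Nat.two_pos (by omega)

end FinNatCast

theorem Fin.add_one_eq_zero_of_val_eq {n : ℕ} [NeZero n] {i : Fin n} (hi : (i : ℕ) = n - 1) :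
    i + 1 = 0 := by
  have hn := Nat.pos_of_ne_zero (NeZero.ne n)
  ext
  simp [Fin.val_add, hi, Nat.sub_add_cancel hn]

theorem cycleMap_eq_updateFrom (n : ℕ) [NeZero n] (i : Fin n) :
    cycleMap n i = updateFrom i (i + 1) (· + if (i : ℕ) = n - 1 then 1 else 0) := by
  funext m
  by_cases hi : (i : ℕ) = n - 1
  · simp [cycleMap, updateFrom, hi, Fin.add_one_eq_zero_of_val_eq hi]
  · simp [cycleMap, updateFrom, hi]

/-- The maps `u_i` are idempotent, commute when not cyclically adjacent, and satisfy
`u_i ∘ u_{i+1} = u_i ∘ u_{i+1} ∘ u_i = u_{i+1} ∘ u_i ∘ u_{i+1}` (indices mod `n`). -/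
theorem cycleMap_relations (n : ℕ) [NeZero n] (hn : 3 ≤ n) :
    (∀ i : Fin n, cycleMap n i ∘ cycleMap n i = cycleMap n i) ∧
    (∀ i j : Fin n, j ≠ i + 1 → i ≠ j + 1 →
      cycleMap n i ∘ cycleMap n j = cycleMap n j ∘ cycleMap n i) ∧
    (∀ i : Fin n,
      cycleMap n i ∘ cycleMap n (i + 1) =
        cycleMap n i ∘ cycleMap n (i + 1) ∘ cycleMap n i ∧
      cycleMap n i ∘ cycleMap n (i + 1) =
        cycleMap n (i + 1) ∘ cycleMap n i ∘ cycleMap n (i + 1)) := by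
  have succ_ne := Fin.add_one_ne_self (by omega : 2 ≤ n)
  have succ_succ_ne := Fin.add_one_add_one_ne_self hn
  simp only [cycleMap_eq_updateFrom]
  refine ⟨fun i => updateFrom_idem (succ_ne i) _, fun i j hji hij => ?_, fun i => ⟨?_, ?_⟩⟩
  · rcases eq_or_ne i j with rfl | hne
    · rfl
    · exact updateFrom_comm hne hji.symm hij.symm _ _
  · exact (updateFrom_comp_updateFrom_comp_self (succ_ne i) (succ_succ_ne i) _ _).symm
  · exact (updateFrom_comp_updateFrom_comp_updateFrom (succ_ne i) (succ_succ_ne i)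
      (succ_ne (i + 1)) _ _).symm
end

section
/- With u_1,…,u_n : ℤ^n → ℤ^n as above (n ≥ 3), the composite u = u_1 ∘ u_2 ∘ ⋯ ∘ u_n satisfies u(m_1,…,m_n) = (m_1+1, m_1+1, …, m_1+1), and consequently all powers u, u^2, u^3, … are pairwise distinct; hence the submonoid of Maps(ℤ^n) generated by u_1,…,u_n is infinite. -/
/-- The composite `u = u_1 ∘ u_2 ∘ ⋯ ∘ u_n`. -/
def cycleComp (n : ℕ) [NeZero n] : (Fin n → ℤ) → (Fin n → ℤ) :=
  (List.ofFn (cycleMap n)).foldr (· ∘ ·) id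

/-!
Applied right to left, `u_n` overwrites the last coordinate by `m_1 + 1`, and then each `u_i`
copies the already overwritten coordinate `i + 1` into coordinate `i`; so after `u_n, …, u_i`
exactly the coordinates from `i` on equal `m_1 + 1`, and `u` is the constant map
`m ↦ (m_1 + 1, …, m_1 + 1)`. Hence `u^k` adds `k` to the first coordinate, and the powers of `u`,
which lie in the submonoid generated by the `u_i`, are pairwise distinct.
-/

section

variable {n : ℕ} [NeZero n]

def raiseFrom (m : Fin n → ℤ) (i : ℕ) (j : Fin n) : ℤ :=
  if i ≤ j then m 0 + 1 else m j

theorem cycleMap_raiseFrom_succ (i : Fin n) (m : Fin n → ℤ) :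
    cycleMap n i (raiseFrom m (i + 1)) = raiseFrom m i := by
  have hsucc : (i : ℕ) ≠ n - 1 → ((i + 1 : Fin n) : ℕ) = i + 1 :=
    fun _ => Fin.val_add_one_of_lt' (by omega)
  funext j
  rw [cycleMap, Function.update_apply]
  simp only [raiseFrom]
  split_ifs <;> first | rfl | omega

theorem foldr_drop_ofFn_cycleMap (m : Fin n → ℤ) {i : ℕ} (hi : i ≤ n) :
    ((List.ofFn (cycleMap n)).drop i).foldr (· ∘ ·) id m = raiseFrom m i := by
  induction hi using Nat.decreasingInduction with
  | self =>
    rw [List.drop_eq_nil_of_le (by simp)]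
    funext j
    simp [raiseFrom, j.isLt.not_ge]
  | of_succ i hi ih =>
    rw [List.drop_eq_getElem_cons (by simpa using hi), List.foldr_cons, Function.comp_apply, ih,
      List.getElem_ofFn]
    exact cycleMap_raiseFrom_succ ⟨i, hi⟩ m

theorem cycleComp_apply (m : Fin n → ℤ) :
    cycleComp n m = fun _ => m 0 + 1 := by
  calc cycleComp n m = raiseFrom m 0 := by
        simpa [cycleComp] using foldr_drop_ofFn_cycleMap m (Nat.zero_le n)
    _ = fun _ => m 0 + 1 := by funext j; simp [raiseFrom]

theorem cycleComp_iterate_apply_zero (m : Fin n → ℤ) (k : ℕ) :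
    (cycleComp n)^[k] m 0 = m 0 + k := by
  induction k with
  | zero => simp
  | succ k ih => rw [Function.iterate_succ_apply', cycleComp_apply, ih]; push_cast; ring

theorem injective_iterate_cycleComp :
    Function.Injective fun k : ℕ => (cycleComp n)^[k] := by
  intro k l hkl
  simpa [cycleComp_iterate_apply_zero] using congrFun (congrFun hkl 0) 0

theorem iterate_cycleComp_mem_closure (k : ℕ) :
    (cycleComp n)^[k] ∈
      Submonoid.closure (Set.range (cycleMap n) : Set (Function.End (Fin n → ℤ))) := by
  let u : Function.End (Fin n → ℤ) := cycleComp n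
  have hu : u = (List.ofFn (cycleMap n) : List (Function.End (Fin n → ℤ))).prod := by
    rw [List.prod_eq_foldr]; rfl
  have : u ∈ Submonoid.closure (Set.range (cycleMap n) : Set (Function.End (Fin n → ℤ))) :=
    hu ▸ list_prod_mem fun f hf => Submonoid.subset_closure (List.mem_ofFn.mp hf)
  -- `u ^ k` in `Function.End` is `(cycleComp n)^[k]` by definition of its `npow`.
  exact pow_mem this k

end

theorem cycleComp_powers_general (n : ℕ) [NeZero n] :
    (∀ m : Fin n → ℤ, cycleComp n m = fun _ => m 0 + 1) ∧
    (∀ k l : ℕ, 1 ≤ k → 1 ≤ l → k ≠ l → (cycleComp n)^[k] ≠ (cycleComp n)^[l]) ∧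
    Infinite (Submonoid.closure
      (Set.range (cycleMap n) : Set (Function.End (Fin n → ℤ)))) := by
  refine ⟨cycleComp_apply, fun k l _ _ hkl => injective_iterate_cycleComp.ne hkl, ?_⟩
  exact Infinite.of_injective (fun k => ⟨(cycleComp n)^[k], iterate_cycleComp_mem_closure k⟩)
    fun k l hkl => injective_iterate_cycleComp (congrArg Subtype.val hkl)

/-- `u = u_1 ∘ ⋯ ∘ u_n` sends `(m_1,…,m_n)` to `(m_1+1,…,m_1+1)`; its powers are
pairwise distinct, hence the submonoid of `Maps(ℤ^n)` generated by the `u_i` is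
infinite. -/
theorem cycleComp_powers (n : ℕ) [NeZero n] (hn : 3 ≤ n) :
    (∀ m : Fin n → ℤ, cycleComp n m = fun _ => m 0 + 1) ∧
    (∀ k l : ℕ, 1 ≤ k → 1 ≤ l → k ≠ l → (cycleComp n)^[k] ≠ (cycleComp n)^[l]) ∧
    Infinite (Submonoid.closure
      (Set.range (cycleMap n) : Set (Function.End (Fin n → ℤ)))) :=
  cycleComp_powers_general n
end

section
/- For n ≥ 3, the Hecke–Kiselman monoid H_Q of the oriented n-cycle Q (vertices a_1,…,a_n with an arrow from a_i to a_{i+1}, indices mod n) is infinite. -/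
open FreeMonoid

/-!
`H_Q` acts on `ℤ`: the generator `a_i` lowers by one every integer congruent to `i` modulo `n`
and fixes all other integers. These maps satisfy the defining relations of `H_Q` (for `n ≥ 3`
the classes `i - 1`, `i`, `i + 1` are distinct), and the product of all generators moves every
integer strictly down, so its powers are pairwise distinct.
-/

namespace HKGraph

variable {V : Type} {M : Type*} [Monoid M]

theorem Rel.lift_eq {Q : HKGraph V} {f : V → M} (idem : ∀ i, f i * f i = f i)
    (comm : ∀ i j, i ≠ j → ¬ Q.edge i j → ¬ Q.arrow i j → ¬ Q.arrow j i → Commute (f i) (f j))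
    (braid : ∀ i j, Q.edge i j → f i * f j * f i = f j * f i * f j)
    (arrow_left : ∀ i j, Q.arrow i j → f i * f j = f i * f j * f i)
    (arrow_right : ∀ i j, Q.arrow i j → f i * f j = f j * f i * f j)
    {a b : FreeMonoid V} (h : Q.Rel a b) : FreeMonoid.lift f a = FreeMonoid.lift f b := by
  cases h with
  | idem i => simpa using idem i
  | comm i j hij he hij' hji => simpa using (comm i j hij he hij' hji).eq
  | braid i j he => simpa using braid i j he
  | arrow_left i j ha => simpa using arrow_left i j ha
  | arrow_right i j ha => simpa using arrow_right i j ha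

def lift (Q : HKGraph V) (f : V → M)
    (hf : ∀ a b, Q.Rel a b → FreeMonoid.lift f a = FreeMonoid.lift f b) : Q.HK →* M :=
  (conGen Q.Rel).lift (FreeMonoid.lift f)
    (Con.conGen_le.mpr fun a b h => (Con.ker_rel _).mpr (hf a b h))

@[simp]
theorem lift_gen (Q : HKGraph V) (f : V → M)
    (hf : ∀ a b, Q.Rel a b → FreeMonoid.lift f a = FreeMonoid.lift f b) (i : V) :
    Q.lift f hf (Q.gen i) = f i := by
  simp [lift, gen]

end HKGraph

namespace Function.End

variable {α : Type*}

theorem list_prod_apply_le [Preorder α] {L : List (Function.End α)}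
    (hL : ∀ f ∈ L, ∀ y, f y ≤ y) (x : α) : L.prod x ≤ x := by
  induction L with
  | nil => exact le_rfl
  | cons g t ih =>
    exact (hL g List.mem_cons_self _).trans (ih fun f hf => hL f (List.mem_cons_of_mem _ hf))

theorem list_prod_apply_lt [PartialOrder α] {L : List (Function.End α)}
    (hL : ∀ f ∈ L, ∀ y, f y ≤ y) {x : α} (h : ∃ f ∈ L, f x < x) : L.prod x < x := by
  induction L with
  | nil => simp at h
  | cons g t ih =>
    have ht : ∀ f ∈ t, ∀ y, f y ≤ y := fun f hf => hL f (List.mem_cons_of_mem _ hf)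
    change g (t.prod x) < x
    rcases (list_prod_apply_le ht x).lt_or_eq with hlt | heq
    · exact (hL g List.mem_cons_self _).trans_lt hlt
    · obtain ⟨f, hf, hfx⟩ := h
      rcases List.mem_cons.1 hf with rfl | hf
      · rwa [heq]
      · exact absurd heq (ih ht ⟨f, hf, hfx⟩).ne

end Function.End

theorem infinite_of_monoidHom_end_apply_lt {M α : Type*} [Monoid M] [Preorder α] [Nonempty α]
    (φ : M →* Function.End α) (g : M) (hg : ∀ x, φ g x < x) : Infinite M := by
  obtain ⟨x⟩ := ‹Nonempty α›
  have hanti : StrictAnti fun k : ℕ => (φ g ^ k) x :=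
    strictAnti_nat_of_succ_lt fun k => by rw [pow_succ']; exact hg _
  refine Infinite.of_injective (g ^ ·) fun k m hkm => hanti.injective ?_
  simp only [← map_pow, hkm]

section decrOn

variable {R : Type*} [CommRing R] [DecidableEq R]

def decrOn (a : R) : Function.End ℤ := fun x => if (x : R) = a then x - 1 else x

theorem decrOn_apply_le (a : R) (x : ℤ) : decrOn a x ≤ x := by
  unfold decrOn
  split_ifs <;> omega

theorem decrOn_apply_lt {a : R} {x : ℤ} (hx : (x : R) = a) : decrOn a x < x := by
  simp [decrOn, hx]

theorem decrOn_mul_self [Nontrivial R] (a : R) : decrOn a * decrOn a = decrOn a := by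
  funext x
  change decrOn a (decrOn a x) = decrOn a x
  by_cases hx : (x : R) = a <;> simp [decrOn, hx]

theorem decrOn_commute {a b : R} (hab : a ≠ b) (hba : b ≠ a + 1) (hab' : a ≠ b + 1) :
    Commute (decrOn a) (decrOn b) := by
  have ha : b - 1 ≠ a := fun h => hba (by rw [← h, sub_add_cancel])
  have hb : a - 1 ≠ b := fun h => hab' (by rw [← h, sub_add_cancel])
  funext x
  change decrOn a (decrOn b x) = decrOn b (decrOn a x)
  by_cases hxa : (x : R) = a <;> by_cases hxb : (x : R) = b <;>
    simp [decrOn, hxa, hxb, hab, hab.symm, ha, hb]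

theorem decrOn_mul_decrOn_add_one_eq_left (h2 : (2 : R) ≠ 0) (a : R) :
    decrOn a * decrOn (a + 1) = decrOn a * decrOn (a + 1) * decrOn a := by
  have : Nontrivial R := ⟨⟨2, 0, h2⟩⟩
  have h₁ : a - 1 ≠ a + 1 := fun h => h2 (by linear_combination -h)
  funext x
  change decrOn a (decrOn (a + 1) x) = decrOn a (decrOn (a + 1) (decrOn a x))
  by_cases hxa : (x : R) = a <;> simp [decrOn, hxa, h₁]

theorem decrOn_mul_decrOn_add_one_eq_right (h2 : (2 : R) ≠ 0) (a : R) :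
    decrOn a * decrOn (a + 1) = decrOn (a + 1) * decrOn a * decrOn (a + 1) := by
  have : Nontrivial R := ⟨⟨2, 0, h2⟩⟩
  have h₁ : a - 1 ≠ a + 1 := fun h => h2 (by linear_combination -h)
  funext x
  change decrOn a (decrOn (a + 1) x) = decrOn (a + 1) (decrOn a (decrOn (a + 1) x))
  by_cases hxa : (x : R) = a <;> by_cases hxb : (x : R) = a + 1 <;> simp [decrOn, hxa, hxb, h₁]

end decrOn

theorem orientedCycle_rel_lift_decrOn_eq {n : ℕ} [NeZero n] (hn : 3 ≤ n) {Q : HKGraph (Fin n)}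
    (harrow : ∀ i j : Fin n, Q.arrow i j ↔ j = i + 1) (hedge : ∀ i j : Fin n, ¬ Q.edge i j)
    {a b : FreeMonoid (Fin n)} (h : Q.Rel a b) :
    FreeMonoid.lift (fun i => decrOn (ZMod.finEquiv n i)) a =
      FreeMonoid.lift (fun i => decrOn (ZMod.finEquiv n i)) b := by
  have : Fact (1 < n) := ⟨by omega⟩
  have h2 : (2 : ZMod n) ≠ 0 := by
    rw [← Nat.cast_two, Ne, ZMod.natCast_eq_zero_iff]
    exact fun h => absurd (Nat.le_of_dvd two_pos h) (by omega)
  have harrow' : ∀ i j, Q.arrow i j ↔ ZMod.finEquiv n j = ZMod.finEquiv n i + 1 := by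
    intro i j
    rw [harrow, ← (ZMod.finEquiv n).injective.eq_iff, map_add, map_one]
  refine h.lift_eq (fun i => decrOn_mul_self _)
    (fun i j hij _ hij' hji => decrOn_commute (by simpa using hij) ((harrow' i j).not.1 hij')
      ((harrow' j i).not.1 hji))
    (fun i j he => (hedge i j he).elim) (fun i j ha => ?_) (fun i j ha => ?_)
  · rw [(harrow' i j).1 ha]
    exact decrOn_mul_decrOn_add_one_eq_left h2 _
  · rw [(harrow' i j).1 ha]
    exact decrOn_mul_decrOn_add_one_eq_right h2 _

/-- The Hecke–Kiselman monoid of the oriented `n`-cycle (`n ≥ 3`) is infinite. -/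
theorem hk_oriented_cycle_infinite (n : ℕ) [NeZero n] (hn : 3 ≤ n)
    (Q : HKGraph (Fin n))
    (harrow : ∀ i j : Fin n, Q.arrow i j ↔ j = i + 1)
    (hedge : ∀ i j : Fin n, ¬ Q.edge i j) :
    Infinite Q.HK := by
  let φ := Q.lift _ fun _ _ h => orientedCycle_rel_lift_decrOn_eq hn harrow hedge h
  refine infinite_of_monoidHom_end_apply_lt φ ((List.finRange n).map Q.gen).prod fun x => ?_
  rw [map_list_prod, List.map_map]
  refine Function.End.list_prod_apply_lt ?_ ?_
  · simp only [List.mem_map, forall_exists_index, and_imp, forall_apply_eq_imp_iff₂]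
    exact fun i _ => decrOn_apply_le _
  · refine ⟨_, List.mem_map_of_mem (List.mem_finRange ((ZMod.finEquiv n).symm x)), ?_⟩
    simp only [Function.comp_apply, φ, HKGraph.lift_gen]
    exact decrOn_apply_lt (by simp)
end

section
/- Let K be the digraph with vertices a, b, c, d, an edge between a and b, an edge between c and d, and arrows a → c, a → d, b → c, b → d. Then the Hecke–Kiselman monoid H_K is an infinite monoid. -/
open FreeMonoid

/-- The four vertices `a, b, c, d` of the digraph `K`. -/
inductive V4 : Type | a | b | c | d

open V4

/-- Defining relations of the Hecke–Kiselman monoid of `K`: edges `a—b`, `c—d`,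
arrows `a→c`, `a→d`, `b→c`, `b→d`. -/
inductive KRel : FreeMonoid V4 → FreeMonoid V4 → Prop
  | idem (x : V4) : KRel (of x * of x) (of x)
  | braid_ab : KRel (of a * of b * of a) (of b * of a * of b)
  | braid_cd : KRel (of c * of d * of c) (of d * of c * of d)
  | ac₁ : KRel (of a * of c) (of a * of c * of a)
  | ac₂ : KRel (of a * of c) (of c * of a * of c)
  | ad₁ : KRel (of a * of d) (of a * of d * of a)
  | ad₂ : KRel (of a * of d) (of d * of a * of d)
  | bc₁ : KRel (of b * of c) (of b * of c * of b)
  | bc₂ : KRel (of b * of c) (of c * of b * of c)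
  | bd₁ : KRel (of b * of d) (of b * of d * of b)
  | bd₂ : KRel (of b * of d) (of d * of b * of d)

/-- The Hecke–Kiselman monoid `H_K`. -/
abbrev HKK : Type := (conGen KRel).Quotient

/-- Images of the generators in `H_K`. -/
def ga : HKK := Con.mk' _ (of a)
def gb : HKK := Con.mk' _ (of b)
def gc : HKK := Con.mk' _ (of c)
def gd : HKK := Con.mk' _ (of d)


/-- States of an infinite automaton on which `H_K` acts: 16 prefix classes with an
integer counter, plus a sink. -/
inductive St : Type
  | sink : St
  | s0 (k : ℤ) : St | s1 (k : ℤ) : St | s2 (k : ℤ) : St | s3 (k : ℤ) : St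
  | s4 (k : ℤ) : St | s5 (k : ℤ) : St | s6 (k : ℤ) : St | s7 (k : ℤ) : St
  | s8 (k : ℤ) : St | s9 (k : ℤ) : St | s10 (k : ℤ) : St | s11 (k : ℤ) : St
  | s12 (k : ℤ) : St | s13 (k : ℤ) : St | s14 (k : ℤ) : St | s15 (k : ℤ) : St

/-- The action of the generators on the automaton. -/
def act : V4 → St → St
  | .a, .s0 k => .s0 (k)
  | .a, .s1 k => .s1 (k)
  | .a, .s2 k => .s2 (k)
  | .a, .s3 k => .s3 (k)
  | .a, .s4 k => .sink
  | .a, .s5 k => .sink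
  | .a, .s6 k => .s1 (k)
  | .a, .s7 k => .s2 (k)
  | .a, .s8 k => .s3 (k - 1)
  | .a, .s9 k => .sink
  | .a, .s10 k => .s3 (k)
  | .a, .s11 k => .s3 (k)
  | .a, .s12 k => .s0 (k + 1)
  | .a, .s13 k => .s0 (k + 1)
  | .a, .s14 k => .s3 (k - 1)
  | .a, .s15 k => .sink
  | .a, .sink => .sink
  | .b, .s0 k => .s4 (k)
  | .b, .s1 k => .sink
  | .b, .s2 k => .sink
  | .b, .s3 k => .s5 (k)
  | .b, .s4 k => .s4 (k)
  | .b, .s5 k => .s5 (k)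
  | .b, .s6 k => .s6 (k)
  | .b, .s7 k => .s7 (k)
  | .b, .s8 k => .s6 (k)
  | .b, .s9 k => .s6 (k)
  | .b, .s10 k => .sink
  | .b, .s11 k => .s7 (k)
  | .b, .s12 k => .sink
  | .b, .s13 k => .s7 (k)
  | .b, .s14 k => .s7 (k)
  | .b, .s15 k => .s7 (k)
  | .b, .sink => .sink
  | .c, .s0 k => .s8 (k)
  | .c, .s1 k => .s1 (k)
  | .c, .s2 k => .s2 (k)
  | .c, .s3 k => .s3 (k)
  | .c, .s4 k => .s9 (k)
  | .c, .s5 k => .s5 (k)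
  | .c, .s6 k => .s6 (k)
  | .c, .s7 k => .s7 (k)
  | .c, .s8 k => .s8 (k)
  | .c, .s9 k => .s9 (k)
  | .c, .s10 k => .s10 (k)
  | .c, .s11 k => .s11 (k)
  | .c, .s12 k => .s10 (k)
  | .c, .s13 k => .s11 (k)
  | .c, .s14 k => .s14 (k)
  | .c, .s15 k => .s15 (k)
  | .c, .sink => .sink
  | .d, .s0 k => .s0 (k)
  | .d, .s1 k => .s12 (k)
  | .d, .s2 k => .s2 (k)
  | .d, .s3 k => .s3 (k)
  | .d, .s4 k => .s4 (k)
  | .d, .s5 k => .s5 (k)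
  | .d, .s6 k => .s13 (k)
  | .d, .s7 k => .s7 (k)
  | .d, .s8 k => .s14 (k)
  | .d, .s9 k => .s15 (k)
  | .d, .s10 k => .s10 (k)
  | .d, .s11 k => .s11 (k)
  | .d, .s12 k => .s12 (k)
  | .d, .s13 k => .s13 (k)
  | .d, .s14 k => .s14 (k)
  | .d, .s15 k => .s15 (k)
  | .d, .sink => .sink


/-- The induced monoid hom from the free monoid to `Function.End St`. -/
def phi : FreeMonoid V4 →* Function.End St := FreeMonoid.lift (fun v => (act v : Function.End St))

lemma phi_of (v : V4) : phi (of v) = act v := FreeMonoid.lift_eval_of _ v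

lemma End_mul_apply (f g : Function.End St) (s : St) : (f * g) s = f (g s) := rfl

lemma krel_ker : ∀ x y, KRel x y → phi x = phi y := by
  intro x y h
  cases h with
  | idem v =>
      cases v <;> (funext s; simp only [map_mul, End_mul_apply, phi_of]; cases s <;> rfl)
  | _ =>
      funext s
      simp only [map_mul, End_mul_apply, phi_of]
      cases s <;> first | rfl | exact congrArg St.s3 (Int.add_sub_cancel _ 1).symm

lemma conGen_le_ker : conGen KRel ≤ Con.ker phi :=
  Con.conGen_le.2 (fun x y h => krel_ker x y h)

/-- The induced hom on the Hecke–Kiselman monoid. -/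
def Phi : HKK →* Function.End St := Con.lift _ phi conGen_le_ker

def xw : FreeMonoid V4 := of a * of d * of b * of c

lemma Phi_mk' : Phi (Con.mk' (conGen KRel) xw) = phi xw := rfl

lemma step (k : ℤ) : phi xw (St.s0 k) = St.s0 (k + 1) := rfl

lemma xw_pow_apply (n : ℕ) (k : ℤ) : ((phi xw) ^ n) (St.s0 k) = St.s0 (k + n) := by
  induction n with
  | zero => simp; rfl
  | succ n ih =>
      rw [pow_succ', End_mul_apply, ih, step]
      congr 1
      push_cast
      ring

/-- The Hecke–Kiselman monoid `H_K` of the digraph `K` is infinite. -/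
theorem hk_K_infinite : Infinite HKK := by
  apply Infinite.of_injective (fun n : ℕ => (Con.mk' (conGen KRel) xw) ^ n)
  intro m n hmn
  simp only at hmn
  have h1 : (phi xw) ^ m = (phi xw) ^ n := by
    have h0 := congrArg Phi hmn
    simpa only [map_pow, Phi_mk'] using h0
  have h2 := congrFun h1 (St.s0 0)
  rw [xw_pow_apply, xw_pow_apply] at h2
  simp only [St.s0.injEq, zero_add, Nat.cast_inj] at h2
  exact h2
end

section
/- In the Hecke–Kiselman monoid H_K of the digraph K (vertices a,b,c,d; edges a—b, c—d; arrows a→c, a→d, b→c, b→d), for every element y of the submonoid generated by c and d, one has a·y = a·y·a and b·y = b·y·b. -/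
open FreeMonoid

open V4

variable {M : Type*} [Monoid M] {e : M}

def IsIdempotentElem.rightAbsorbSubmonoid (he : IsIdempotentElem e) : Submonoid M where
  carrier := {y | e * y = e * y * e}
  one_mem' := by simp [he.eq]
  mul_mem' {x z} (hx : e * x = e * x * e) (hz : e * z = e * z * e) :=
    calc e * (x * z) = e * x * e * z := by rw [← hx, mul_assoc]
      _ = e * x * (e * z * e) := by rw [← hz, mul_assoc]
      _ = e * (x * z) * e := by rw [← mul_assoc, ← mul_assoc, ← hx, mul_assoc e x z]

theorem IsIdempotentElem.mul_eq_mul_mul_self_of_mem_closure (he : IsIdempotentElem e) {s : Set M}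
    (hs : ∀ x ∈ s, e * x = e * x * e) {y : M} (hy : y ∈ Submonoid.closure s) :
    e * y = e * y * e :=
  (Submonoid.closure_le (S := he.rightAbsorbSubmonoid).2 hs) hy

lemma KRel.mk_eq {x y : FreeMonoid V4} (h : KRel x y) :
    (Con.mk' (conGen KRel) x : HKK) = Con.mk' _ y :=
  (Con.eq _).2 (ConGen.Rel.of _ _ h)

/-- In `H_K`, for every `y` in the submonoid generated by `c` and `d`,
`a·y = a·y·a` and `b·y = b·y·b`. -/
theorem hkK_left_absorb (y : HKK) (hy : y ∈ Submonoid.closure {gc, gd}) :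
    ga * y = ga * y * ga ∧ gb * y = gb * y * gb := by
  have ha : IsIdempotentElem ga := KRel.mk_eq (KRel.idem a)
  have hb : IsIdempotentElem gb := KRel.mk_eq (KRel.idem b)
  refine ⟨ha.mul_eq_mul_mul_self_of_mem_closure ?_ hy, hb.mul_eq_mul_mul_self_of_mem_closure ?_ hy⟩
  · rintro x (rfl | rfl)
    exacts [KRel.mk_eq KRel.ac₁, KRel.mk_eq KRel.ad₁]
  · rintro x (rfl | rfl)
    exacts [KRel.mk_eq KRel.bc₁, KRel.mk_eq KRel.bd₁]
end

section
/- In the Hecke–Kiselman monoid H_K of K (vertices a,b,c,d; edges a—b, c—d; arrows a→c, a→d, b→c, b→d), for every element v in the submonoid generated by c and d, one has (a·b)·v·(b·a) = (a·b)·v·a and (b·a)·v·(a·b) = (b·a)·v·b. -/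
open FreeMonoid

open V4

/-- If `x` is idempotent, `x w₁ x = x w₁` and `x w₂ x = x w₂`, then
`x w₁ w₂ x = x w₁ x w₂ x = x w₁ x w₂ = x w₁ w₂`. -/
def Submonoid.rightAbsorbing {M : Type*} [Monoid M] {x : M} (hx : IsIdempotentElem x) :
    Submonoid M where
  carrier := {w | x * w * x = x * w}
  one_mem' := by simpa using hx.eq
  mul_mem' {w₁ w₂} (h₁ : x * w₁ * x = x * w₁) (h₂ : x * w₂ * x = x * w₂) := by
    calc x * (w₁ * w₂) * x = x * w₁ * x * (w₂ * x) := by rw [h₁]; simp only [mul_assoc]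
      _ = x * w₁ * (x * w₂) := by rw [← h₂]; simp only [mul_assoc]
      _ = x * (w₁ * w₂) := by rw [← mul_assoc, h₁, mul_assoc]

theorem mul_mul_self_eq_of_mem_closure {M : Type*} [Monoid M] {x : M} (hx : IsIdempotentElem x)
    {S : Set M} (hS : ∀ s ∈ S, x * s * x = x * s) {w : M} (hw : w ∈ Submonoid.closure S) :
    x * w * x = x * w :=
  (Submonoid.closure_le (S := Submonoid.rightAbsorbing hx)).mpr hS hw

theorem mk_eq_of_rel {u w : FreeMonoid V4} (h : KRel u w) :
    Con.mk' (conGen KRel) u = Con.mk' (conGen KRel) w :=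
  (Con.eq _).mpr (ConGen.Rel.of _ _ h)

theorem isIdempotentElem_ga : IsIdempotentElem ga := mk_eq_of_rel (KRel.idem a)

theorem isIdempotentElem_gb : IsIdempotentElem gb := mk_eq_of_rel (KRel.idem b)

theorem ga_mul_mul_ga_of_mem_closure {w : HKK} (hw : w ∈ Submonoid.closure {gc, gd}) :
    ga * w * ga = ga * w := by
  refine mul_mul_self_eq_of_mem_closure isIdempotentElem_ga ?_ hw
  rintro s (rfl | rfl)
  exacts [(mk_eq_of_rel KRel.ac₁).symm, (mk_eq_of_rel KRel.ad₁).symm]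

theorem gb_mul_mul_gb_of_mem_closure {w : HKK} (hw : w ∈ Submonoid.closure {gc, gd}) :
    gb * w * gb = gb * w := by
  refine mul_mul_self_eq_of_mem_closure isIdempotentElem_gb ?_ hw
  rintro s (rfl | rfl)
  exacts [(mk_eq_of_rel KRel.bc₁).symm, (mk_eq_of_rel KRel.bd₁).symm]

/-- In `H_K`, for every `v` in the submonoid generated by `c` and `d`,
`ab·v·ba = ab·v·a` and `ba·v·ab = ba·v·b`. -/
theorem hkK_abvba (v : HKK) (hv : v ∈ Submonoid.closure {gc, gd}) :
    (ga * gb) * v * (gb * ga) = (ga * gb) * v * ga ∧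
    (gb * ga) * v * (ga * gb) = (gb * ga) * v * gb := by
  constructor
  · calc ga * gb * v * (gb * ga) = ga * (gb * v * gb) * ga := by simp only [mul_assoc]
      _ = ga * gb * v * ga := by rw [gb_mul_mul_gb_of_mem_closure hv]; simp only [mul_assoc]
  · calc gb * ga * v * (ga * gb) = gb * (ga * v * ga) * gb := by simp only [mul_assoc]
      _ = gb * ga * v * gb := by rw [ga_mul_mul_ga_of_mem_closure hv]; simp only [mul_assoc]
end
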